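/- Let G be a connected simple graph of diameter greater than 3 whose complement G^c is connected, and let T be a spanning tree of G such that T^c is connected. Then λ1(G^c) ≥ λ1(T^c), with equality if and only if G = T (i.e., G is itself a tree). -/

import Mathlib

open SimpleGraph Finset

/-- Distance matrix of a graph. -/
noncomputable def distMatrix {V : Type*} [Fintype V] (G : SimpleGraph V) : Matrix V V ℝ :=
  Matrix.of fun u v => (G.dist u v : ℝ)

/-- Largest eigenvalue of the distance matrix (distance spectral radius). -/
noncomputable def lam1 {V : Type*} [Fintype V] (G : SimpleGraph V) : ℝ :=
  sSup {μ : ℝ | ∃ x : V → ℝ, x ≠ 0 ∧ (distMatrix G).mulVec x = μ • x}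

/-- Least eigenvalue of the distance matrix. -/
noncomputable def lamMin {V : Type*} [Fintype V] (G : SimpleGraph V) : ℝ :=
  sInf {μ : ℝ | ∃ x : V → ℝ, x ≠ 0 ∧ (distMatrix G).mulVec x = μ • x}

/-- `H(s,t)`: complete graph on `s+t` vertices plus vertex `u = s+t` joined to the
first `s` clique vertices and vertex `v = s+t+1` joined to the remaining `t`. -/
def Hgraph (s t : ℕ) : SimpleGraph (Fin (s + t + 2)) :=
  SimpleGraph.fromRel fun i j =>
    (i.val < s + t ∧ j.val < s + t) ∨
    (i.val = s + t ∧ j.val < s) ∨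
    (i.val = s + t + 1 ∧ s ≤ j.val ∧ j.val < s + t)

/-- The double star `T(a,b)`: centers `0, 1`; `a` pendants on `0`, `b` pendants on `1`. -/
def Tdouble (a b : ℕ) : SimpleGraph (Fin (a + b + 2)) :=
  SimpleGraph.fromRel fun i j =>
    (i.val = 0 ∧ j.val = 1) ∨
    (i.val = 0 ∧ 2 ≤ j.val ∧ j.val < a + 2) ∨
    (i.val = 1 ∧ a + 2 ≤ j.val)

/-- `T1(a,b)`: path `0-1-2` with `a` pendants on `0` and `b` pendants on `2`. -/
def T1graph (a b : ℕ) : SimpleGraph (Fin (a + b + 3)) :=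
  SimpleGraph.fromRel fun i j =>
    (i.val = 0 ∧ j.val = 1) ∨ (i.val = 1 ∧ j.val = 2) ∨
    (i.val = 0 ∧ 3 ≤ j.val ∧ j.val < a + 3) ∨
    (i.val = 2 ∧ a + 3 ≤ j.val)

/-- `T2(a,b)`: the double star `T(a,b)` (centers `0,1`, pendants `2..a+1` on `0`,
`a+2..a+b+1` on `1`) with an extra pendant vertex `a+b+2` attached to the pendant `2`. -/
def T2graph (a b : ℕ) : SimpleGraph (Fin (a + b + 3)) :=
  SimpleGraph.fromRel fun i j =>
    (i.val = 0 ∧ j.val = 1) ∨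
    (i.val = 0 ∧ 2 ≤ j.val ∧ j.val < a + 2) ∨
    (i.val = 1 ∧ a + 2 ≤ j.val ∧ j.val < a + b + 2) ∨
    (i.val = 2 ∧ j.val = a + b + 2)

/-- `B1(p,q)`: complete bipartite graph with parts `{0,…,p-1}` and `{p,…,p+q-1}`
minus the edge between `u = 0` and `v = p`. -/
def B1graph (p q : ℕ) : SimpleGraph (Fin (p + q)) :=
  SimpleGraph.fromRel fun i j =>
    i.val < p ∧ p ≤ j.val ∧ ¬(i.val = 0 ∧ j.val = p)

/-- `B2(p,q)`: `B1(p,q)` where all edges at `w = 1` except the edge to `v = p` are deleted. -/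
def B2graph (p q : ℕ) : SimpleGraph (Fin (p + q)) :=
  SimpleGraph.fromRel fun i j =>
    i.val < p ∧ p ≤ j.val ∧ ¬(i.val = 0 ∧ j.val = p) ∧ (i.val = 1 → j.val = p)

/-- `L'` on `n` vertices: `K_{n-2}` on `{0,…,n-3}` minus the edge `wu` (`w = 0`, `u = 1`),
with a pendant `w' = n-2` at `w` and a pendant `v = n-1` at `u`. -/
def L'graph (n : ℕ) : SimpleGraph (Fin n) :=
  SimpleGraph.fromRel fun i j =>
    (i.val < n - 2 ∧ j.val < n - 2 ∧ ¬(i.val = 0 ∧ j.val = 1) ∧ ¬(i.val = 1 ∧ j.val = 0)) ∨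
    (i.val = 0 ∧ j.val = n - 2) ∨
    (i.val = 1 ∧ j.val = n - 1)

/-- `L(p,q)`: disjoint union of `K_p` on `{0,…,p-1}` (minus the edge `wu`, `w = 0`, `u = 1`)
and `K_q` on `{p,…,p+q-1}`, plus the edge from `u = 1` to `v = p`. -/
def Lgraph (p q : ℕ) : SimpleGraph (Fin (p + q)) :=
  SimpleGraph.fromRel fun i j =>
    (i.val < p ∧ j.val < p ∧ ¬(i.val = 0 ∧ j.val = 1) ∧ ¬(i.val = 1 ∧ j.val = 0)) ∨
    (p ≤ i.val ∧ p ≤ j.val) ∨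
    (i.val = 1 ∧ j.val = p)

/-- The star `K_{1,n-1}` on `n` vertices with center `0`. -/
def starGraph (n : ℕ) : SimpleGraph (Fin n) :=
  SimpleGraph.fromRel fun i _ => i.val = 0

/-! Since `T ≤ G` we have `Gᶜ ≤ Tᶜ`, so `D(Tᶜ) ≤ D(Gᶜ)` entrywise, strictly at an edge `ab` of `G`
not in `T` (distance `1` in `Tᶜ`, at least `2` in `Gᶜ`). As `Tᶜ` is connected, `D(Tᶜ)` has
positive off-diagonal entries, so its Perron vector `y` is positive and
`λ₁(Tᶜ) ‖y‖² = yᵀ D(Tᶜ) y ≤ yᵀ D(Gᶜ) y ≤ λ₁(Gᶜ) ‖y‖²`, the middle inequality being strict if `G ≠ T`. -/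

namespace Matrix

variable {n : Type*} [Fintype n]

theorem setOf_exists_mulVec_eq_smul_eq_spectrum {K : Type*} [Field K] [DecidableEq n]
    (A : Matrix n n K) : {μ : K | ∃ x : n → K, x ≠ 0 ∧ A *ᵥ x = μ • x} = spectrum K A := by
  ext μ
  rw [Set.mem_ofPred_eq, ← spectrum_toLin', ← Module.End.hasEigenvalue_iff_mem_spectrum]
  constructor
  · rintro ⟨x, hx, hAx⟩
    exact Module.End.hasEigenvalue_of_hasEigenvector
      ⟨Module.End.mem_eigenspace_iff.mpr (by simpa using hAx), hx⟩
  · intro h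
    obtain ⟨x, hx, hx0⟩ := h.exists_hasEigenvector
    exact ⟨x, hx0, by simpa using Module.End.mem_eigenspace_iff.mp hx⟩

theorem dotProduct_mulVec_eq_sum {R : Type*} [CommSemiring R] (A : Matrix n n R) (x y : n → R) :
    x ⬝ᵥ A *ᵥ y = ∑ i, ∑ j, x i * A i j * y j := by
  simp only [dotProduct, mulVec, Finset.mul_sum, mul_assoc]

variable {A B : Matrix n n ℝ}

theorem dotProduct_mulVec_le_abs (hA : ∀ i j, 0 ≤ A i j) (x : n → ℝ) :
    x ⬝ᵥ A *ᵥ x ≤ |x| ⬝ᵥ A *ᵥ |x| := by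
  rw [dotProduct_mulVec_eq_sum, dotProduct_mulVec_eq_sum]
  refine Finset.sum_le_sum fun i _ => Finset.sum_le_sum fun j _ => ?_
  calc x i * A i j * x j ≤ |x i * A i j * x j| := le_abs_self _
    _ = |x i| * A i j * |x j| := by rw [abs_mul, abs_mul, abs_of_nonneg (hA i j)]

theorem dotProduct_mulVec_le_of_le {y : n → ℝ} (hy : 0 ≤ y) (hAB : ∀ i j, A i j ≤ B i j) :
    y ⬝ᵥ A *ᵥ y ≤ y ⬝ᵥ B *ᵥ y := by
  rw [dotProduct_mulVec_eq_sum, dotProduct_mulVec_eq_sum]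
  refine Finset.sum_le_sum fun i _ => Finset.sum_le_sum fun j _ => ?_
  have := hy i
  have := hy j
  gcongr
  exact hAB i j

theorem dotProduct_mulVec_lt_of_lt {y : n → ℝ} (hy : ∀ i, 0 < y i) (hAB : ∀ i j, A i j ≤ B i j)
    {a b : n} (hab : A a b < B a b) : y ⬝ᵥ A *ᵥ y < y ⬝ᵥ B *ᵥ y := by
  have hle : ∀ i j, y i * A i j * y j ≤ y i * B i j * y j := fun i j => by
    have := (hy i).le
    have := (hy j).le
    gcongr
    exact hAB i j
  rw [dotProduct_mulVec_eq_sum, dotProduct_mulVec_eq_sum]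
  refine Finset.sum_lt_sum (fun i _ => Finset.sum_le_sum fun j _ => hle i j) ⟨a, mem_univ _, ?_⟩
  refine Finset.sum_lt_sum (fun j _ => hle a j) ⟨b, mem_univ _, ?_⟩
  have := hy a
  have := hy b
  gcongr

theorem pos_of_mulVec_eq_smul (hA : ∀ i j, i ≠ j → 0 < A i j) {y : n → ℝ} {μ : ℝ}
    (hy0 : y ≠ 0) (hy : 0 ≤ y) (hAy : A *ᵥ y = μ • y) (i : n) : 0 < y i := by
  refine (hy i).lt_of_ne fun hyi => hy0 (funext fun j => ?_)
  obtain rfl | hij := eq_or_ne i j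
  · exact hyi.symm
  have hterm_nonneg : ∀ k ∈ univ, 0 ≤ A i k * y k := fun k _ => by
    obtain rfl | hik := eq_or_ne i k
    · simp [← hyi]
    · exact mul_nonneg (hA i k hik).le (hy k)
  have hsum : ∑ k, A i k * y k = 0 := by
    simpa [mulVec, dotProduct, ← hyi] using congrFun hAy i
  have := (Finset.sum_eq_zero_iff_of_nonneg hterm_nonneg).mp hsum j (mem_univ _)
  exact (mul_eq_zero.mp this).resolve_left (hA i j hij).ne'

variable [DecidableEq n]

/-- The largest real eigenvalue; it is `0` when `n` is empty. -/
noncomputable def maxEigenvalue (A : Matrix n n ℝ) : ℝ := sSup (spectrum ℝ A)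

theorem le_maxEigenvalue {μ : ℝ} (hμ : μ ∈ spectrum ℝ A) : μ ≤ A.maxEigenvalue :=
  le_csSup A.finite_real_spectrum.bddAbove hμ

theorem dotProduct_algebraMap_sub_mulVec (c : ℝ) (y : n → ℝ) :
    star y ⬝ᵥ (algebraMap ℝ _ c - A) *ᵥ y = c * (y ⬝ᵥ y) - y ⬝ᵥ A *ᵥ y := by
  rw [star_trivial, sub_mulVec, Algebra.algebraMap_eq_smul_one, smul_mulVec, one_mulVec,
    dotProduct_sub, dotProduct_smul, smul_eq_mul]

namespace IsHermitian

theorem maxEigenvalue_mem_spectrum [Nonempty n] (hA : A.IsHermitian) :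
    A.maxEigenvalue ∈ spectrum ℝ A :=
  (hA.spectrum_real_eq_range_eigenvalues ▸ Set.range_nonempty _).csSup_mem
    A.finite_real_spectrum

theorem posSemidef_algebraMap_maxEigenvalue_sub (hA : A.IsHermitian) :
    (algebraMap ℝ _ A.maxEigenvalue - A).PosSemidef := by
  refine posSemidef_iff_isHermitian_and_spectrum_nonneg.mpr ⟨(isHermitian_diagonal _).sub hA, ?_⟩
  rw [← spectrum.singleton_sub_eq]
  rintro _ ⟨_, rfl, μ, hμ, rfl⟩
  exact sub_nonneg.mpr (le_maxEigenvalue hμ)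

theorem dotProduct_mulVec_le (hA : A.IsHermitian) (y : n → ℝ) :
    y ⬝ᵥ A *ᵥ y ≤ A.maxEigenvalue * (y ⬝ᵥ y) := by
  have h := hA.posSemidef_algebraMap_maxEigenvalue_sub.dotProduct_mulVec_nonneg y
  rw [dotProduct_algebraMap_sub_mulVec] at h
  linarith

theorem mulVec_eq_maxEigenvalue_smul (hA : A.IsHermitian) {y : n → ℝ}
    (hy : y ⬝ᵥ A *ᵥ y = A.maxEigenvalue * (y ⬝ᵥ y)) : A *ᵥ y = A.maxEigenvalue • y := by
  have h := hA.posSemidef_algebraMap_maxEigenvalue_sub.dotProduct_mulVec_zero_iff y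
  rw [dotProduct_algebraMap_sub_mulVec, hy, sub_self, sub_mulVec, sub_eq_zero,
    Algebra.algebraMap_eq_smul_one, smul_mulVec, one_mulVec] at h
  exact (h.mp rfl).symm

/-- Perron–Frobenius for symmetric nonnegative matrices: replacing an eigenvector `x` by `|x|`
can only increase the Rayleigh quotient, so `|x|` is again an eigenvector. -/
theorem exists_nonneg_mulVec_eq_maxEigenvalue_smul [Nonempty n] (hA : A.IsHermitian)
    (hnn : ∀ i j, 0 ≤ A i j) : ∃ y : n → ℝ, y ≠ 0 ∧ 0 ≤ y ∧ A *ᵥ y = A.maxEigenvalue • y := by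
  have hmem := hA.maxEigenvalue_mem_spectrum
  rw [← setOf_exists_mulVec_eq_smul_eq_spectrum] at hmem
  obtain ⟨x, hx0, hAx⟩ := hmem
  have habs : |x| ⬝ᵥ |x| = x ⬝ᵥ x :=
    Finset.sum_congr rfl fun i _ => abs_mul_abs_self (x i)
  refine ⟨|x|, by simpa using hx0, abs_nonneg x, hA.mulVec_eq_maxEigenvalue_smul ?_⟩
  refine le_antisymm (hA.dotProduct_mulVec_le _) ?_
  calc A.maxEigenvalue * (|x| ⬝ᵥ |x|) = x ⬝ᵥ A *ᵥ x := by
        rw [habs, hAx, dotProduct_smul, smul_eq_mul]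
    _ ≤ |x| ⬝ᵥ A *ᵥ |x| := dotProduct_mulVec_le_abs hnn x

theorem maxEigenvalue_le_of_le (hA : A.IsHermitian) (hB : B.IsHermitian)
    (hnn : ∀ i j, 0 ≤ A i j) (hAB : ∀ i j, A i j ≤ B i j) :
    A.maxEigenvalue ≤ B.maxEigenvalue := by
  cases isEmpty_or_nonempty n
  · exact (congrArg maxEigenvalue (Subsingleton.elim A B)).le
  obtain ⟨y, hy0, hy, hAy⟩ := hA.exists_nonneg_mulVec_eq_maxEigenvalue_smul hnn
  have hyy : 0 < y ⬝ᵥ y := by simpa using dotProduct_star_self_pos_iff.mpr hy0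
  refine le_of_mul_le_mul_right ?_ hyy
  calc A.maxEigenvalue * (y ⬝ᵥ y) = y ⬝ᵥ A *ᵥ y := by rw [hAy, dotProduct_smul, smul_eq_mul]
    _ ≤ y ⬝ᵥ B *ᵥ y := dotProduct_mulVec_le_of_le hy hAB
    _ ≤ B.maxEigenvalue * (y ⬝ᵥ y) := hB.dotProduct_mulVec_le y

theorem maxEigenvalue_lt_of_lt (hA : A.IsHermitian) (hB : B.IsHermitian)
    (hnn : ∀ i j, 0 ≤ A i j) (hpos : ∀ i j, i ≠ j → 0 < A i j) (hAB : ∀ i j, A i j ≤ B i j)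
    {a b : n} (hab : A a b < B a b) : A.maxEigenvalue < B.maxEigenvalue := by
  have : Nonempty n := ⟨a⟩
  obtain ⟨y, hy0, hy, hAy⟩ := hA.exists_nonneg_mulVec_eq_maxEigenvalue_smul hnn
  have hypos := pos_of_mulVec_eq_smul hpos hy0 hy hAy
  have hyy : 0 < y ⬝ᵥ y := by simpa using dotProduct_star_self_pos_iff.mpr hy0
  refine lt_of_mul_lt_mul_right ?_ hyy.le
  calc A.maxEigenvalue * (y ⬝ᵥ y) = y ⬝ᵥ A *ᵥ y := by rw [hAy, dotProduct_smul, smul_eq_mul]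
    _ < y ⬝ᵥ B *ᵥ y := dotProduct_mulVec_lt_of_lt hypos hAB hab
    _ ≤ B.maxEigenvalue * (y ⬝ᵥ y) := hB.dotProduct_mulVec_le y

end IsHermitian

end Matrix

section DistMatrix

variable {V : Type*} [Fintype V] {G H : SimpleGraph V}

theorem distMatrix_apply (G : SimpleGraph V) (u v : V) : distMatrix G u v = G.dist u v := rfl

theorem distMatrix_isHermitian (G : SimpleGraph V) : (distMatrix G).IsHermitian := by
  ext u v
  simp [distMatrix, dist_comm]

theorem distMatrix_nonneg (G : SimpleGraph V) (u v : V) : 0 ≤ distMatrix G u v :=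
  Nat.cast_nonneg _

theorem distMatrix_apply_of_adj {u v : V} (h : G.Adj u v) : distMatrix G u v = 1 := by
  simp [distMatrix, dist_eq_one_iff_adj.mpr h]

theorem SimpleGraph.Connected.distMatrix_pos (hG : G.Connected) {u v : V} (h : u ≠ v) :
    0 < distMatrix G u v :=
  Nat.cast_pos.mpr (hG.pos_dist_of_ne h)

theorem SimpleGraph.Connected.two_le_distMatrix (hG : G.Connected) {u v : V} (hne : u ≠ v)
    (hadj : ¬G.Adj u v) : 2 ≤ distMatrix G u v := by
  have h0 := hG.pos_dist_of_ne hne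
  have h1 : G.dist u v ≠ 1 := fun h => hadj (dist_eq_one_iff_adj.mp h)
  rw [distMatrix_apply]
  exact_mod_cast (show 2 ≤ G.dist u v by omega)

theorem SimpleGraph.Connected.distMatrix_le_of_le (hG : G.Connected) (hGH : G ≤ H) (u v : V) :
    distMatrix H u v ≤ distMatrix G u v :=
  Nat.cast_le.mpr ((hG.preconnected u v).dist_anti hGH)

theorem lam1_eq_maxEigenvalue [DecidableEq V] (G : SimpleGraph V) :
    lam1 G = (distMatrix G).maxEigenvalue :=
  congrArg sSup (Matrix.setOf_exists_mulVec_eq_smul_eq_spectrum _)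

end DistMatrix

theorem stmt_6_general {V : Type*} [Fintype V] (G T : SimpleGraph V)
    (hcc : Gᶜ.Connected)
    (hTG : T ≤ G) (hTc : Tᶜ.Connected) :
    lam1 Tᶜ ≤ lam1 Gᶜ ∧ (lam1 Gᶜ = lam1 Tᶜ ↔ G = T) := by
  classical
  have hle := hcc.distMatrix_le_of_le (compl_le_compl_iff_le.mpr hTG)
  simp only [lam1_eq_maxEigenvalue]
  refine ⟨(distMatrix_isHermitian _).maxEigenvalue_le_of_le (distMatrix_isHermitian _)
    (distMatrix_nonneg _) hle, fun heq => ?_, fun h => by rw [h]⟩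
  by_contra hne
  obtain ⟨a, b, hab, hTab⟩ : ∃ a b, G.Adj a b ∧ ¬T.Adj a b := by
    by_contra! h
    exact hne (le_antisymm h hTG)
  have hlt : distMatrix Tᶜ a b < distMatrix Gᶜ a b := by
    rw [distMatrix_apply_of_adj ((compl_adj T a b).mpr ⟨hab.ne, hTab⟩)]
    linarith [hcc.two_le_distMatrix hab.ne fun h => h.2 hab]
  exact ((distMatrix_isHermitian _).maxEigenvalue_lt_of_lt (distMatrix_isHermitian _)
    (distMatrix_nonneg _) (fun _ _ => hTc.distMatrix_pos) hle hlt).ne' heq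

/-- If `G` is connected of diameter `> 3` with `Gᶜ` connected and `T` is a
spanning tree of `G` with `Tᶜ` connected, then `λ₁(Gᶜ) ≥ λ₁(Tᶜ)`, with equality iff `G = T`. -/
theorem stmt_6 {V : Type*} [Fintype V] (G T : SimpleGraph V)
    (hconn : G.Connected) (hcc : Gᶜ.Connected)
    (hdiam : ∃ u v : V, 3 < G.dist u v)
    (hTG : T ≤ G) (hT : T.IsTree) (hTc : Tᶜ.Connected) :
    lam1 Tᶜ ≤ lam1 Gᶜ ∧ (lam1 Gᶜ = lam1 Tᶜ ↔ G = T) :=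
  stmt_6_general G T hcc hTG hTc
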